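/- arXiv:0804.4365 — 7 statements merged into one kernel-verified Lean document; each statement's English description precedes it below -/
import Mathlib

section
/- Let p₁, …, p_k be distinct prime numbers. Then the 2^k real numbers ∏_{i∈I} √p_i, as I ranges over all subsets of {1, …, k} (with the empty product equal to 1), are linearly independent over the rationals ℚ. -/
/-!
Let `K_s = ℚ(√q : q ∈ s)`. Since `√a` squares into `ℚ`, every element of `K_{s ∪ {a}}` has the form
`A + B√a` with `A, B ∈ K_s`. By induction on `s`, `√d ∉ K_s` for every squarefree `d ≠ 1` with no
prime factor in `s`: squaring `√d = A + B√a` forces `AB = 0` (otherwise `√a ∈ K_s`), and then either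
`√d = A ∈ K_s` or `√(da) = aB ∈ K_s`. In particular `√a ∉ K_s`, so the products not involving `√a`
and those involving it span subspaces of `K_s` and `√a K_s` that meet only in `0`, and linear
independence follows by induction on the set of primes.
-/

open Finset IntermediateField

theorem exists_eq_add_mul_of_mem_adjoin_insert {R A : Type*} [CommRing R] [CommRing A]
    [Algebra R A] {S : Set A} {y : A} (hy : y ^ 2 ∈ Algebra.adjoin R S) {x : A}
    (hx : x ∈ Algebra.adjoin R (insert y S)) :
    ∃ a ∈ Algebra.adjoin R S, ∃ b ∈ Algebra.adjoin R S, x = a + y * b := by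
  induction hx using Algebra.adjoin_induction with
  | mem x hx =>
    rcases hx with rfl | hx
    · exact ⟨0, zero_mem _, 1, one_mem _, by ring⟩
    · exact ⟨x, Algebra.subset_adjoin hx, 0, zero_mem _, by ring⟩
  | algebraMap r => exact ⟨algebraMap R A r, Subalgebra.algebraMap_mem _ r, 0, zero_mem _, by ring⟩
  | add x x' _ _ h h' =>
    obtain ⟨a, ha, b, hb, rfl⟩ := h
    obtain ⟨a', ha', b', hb', rfl⟩ := h'
    exact ⟨a + a', add_mem ha ha', b + b', add_mem hb hb', by ring⟩
  | mul x x' _ _ h h' =>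
    obtain ⟨a, ha, b, hb, rfl⟩ := h
    obtain ⟨a', ha', b', hb', rfl⟩ := h'
    exact ⟨a * a' + y ^ 2 * (b * b'), add_mem (mul_mem ha ha') (mul_mem hy (mul_mem hb hb')),
      a * b' + b * a', add_mem (mul_mem ha hb') (mul_mem hb ha'), by ring⟩

theorem Nat.not_isSquare_of_squarefree {d : ℕ} (hd : Squarefree d) (h1 : d ≠ 1) :
    ¬IsSquare d := by
  rintro ⟨r, rfl⟩
  exact h1 (by simpa using hd r dvd_rfl)

noncomputable def sqrtProd (t : Finset ℕ) : ℝ := ∏ q ∈ t, √(q : ℝ)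

noncomputable def sqrtField (s : Finset ℕ) : IntermediateField ℚ ℝ :=
  adjoin ℚ ((fun q : ℕ ↦ √(q : ℝ)) '' s)

theorem sqrtProd_insert {a : ℕ} {t : Finset ℕ} (ha : a ∉ t) :
    sqrtProd (insert a t) = √(a : ℝ) * sqrtProd t :=
  prod_insert ha

theorem sqrt_mem_sqrtField {q : ℕ} {s : Finset ℕ} (hq : q ∈ s) : √(q : ℝ) ∈ sqrtField s :=
  subset_adjoin _ _ ⟨q, hq, rfl⟩

theorem sqrtProd_mem_sqrtField {t s : Finset ℕ} (h : t ⊆ s) : sqrtProd t ∈ sqrtField s :=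
  prod_mem fun _ hq ↦ sqrt_mem_sqrtField (h hq)

theorem sqrtField_empty : sqrtField ∅ = ⊥ := by
  simp [sqrtField]

theorem exists_eq_add_sqrt_mul_of_mem_sqrtField_insert {a : ℕ} {s : Finset ℕ} {x : ℝ}
    (hx : x ∈ sqrtField (insert a s)) :
    ∃ A ∈ sqrtField s, ∃ B ∈ sqrtField s, x = A + √(a : ℝ) * B := by
  have halg (t : Finset ℕ) : ∀ y ∈ (fun q : ℕ ↦ √(q : ℝ)) '' t, IsAlgebraic ℚ y := by
    rintro _ ⟨q, -, rfl⟩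
    refine IsAlgebraic.of_pow two_pos ?_
    rw [Real.sq_sqrt q.cast_nonneg]
    exact isAlgebraic_algebraMap (q : ℚ)
  have hsub (t : Finset ℕ) : (sqrtField t).toSubalgebra = Algebra.adjoin ℚ _ :=
    adjoin_toSubalgebra_of_isAlgebraic (halg t)
  rw [← mem_toSubalgebra, hsub, coe_insert, Set.image_insert_eq] at hx
  have hsq : √(a : ℝ) ^ 2 ∈ Algebra.adjoin ℚ ((fun q : ℕ ↦ √(q : ℝ)) '' s) := by
    rw [Real.sq_sqrt a.cast_nonneg]
    exact Subalgebra.natCast_mem _ a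
  simpa only [← hsub, mem_toSubalgebra] using exists_eq_add_mul_of_mem_adjoin_insert hsq hx

theorem not_dvd_prime_of_notMem {s : Finset ℕ} (hs : ∀ q ∈ s, q.Prime) {a : ℕ}
    (ha : a.Prime) (has : a ∉ s) : ∀ q ∈ s, ¬q ∣ a :=
  fun q hq hqa ↦ has ((Nat.prime_dvd_prime_iff_eq (hs q hq) ha).1 hqa ▸ hq)

theorem sqrt_notMem_sqrtField {s : Finset ℕ} (hs : ∀ q ∈ s, q.Prime) {d : ℕ} (hd : Squarefree d)
    (hd1 : d ≠ 1) (hds : ∀ q ∈ s, ¬q ∣ d) : √(d : ℝ) ∉ sqrtField s := by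
  induction s using Finset.induction_on generalizing d with
  | empty =>
    rw [sqrtField_empty, mem_bot]
    exact irrational_sqrt_natCast_iff.2 (Nat.not_isSquare_of_squarefree hd hd1)
  | @insert a s ha ih =>
    have hs' : ∀ q ∈ s, q.Prime := fun q hq ↦ hs q (mem_insert_of_mem hq)
    have hap : a.Prime := hs a (mem_insert_self a s)
    have had : ¬a ∣ d := hds a (mem_insert_self a s)
    have hds' : ∀ q ∈ s, ¬q ∣ d := fun q hq ↦ hds q (mem_insert_of_mem hq)
    have hqa := not_dvd_prime_of_notMem hs' hap ha
    intro hmem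
    obtain ⟨A, hA, B, hB, hAB⟩ := exists_eq_add_sqrt_mul_of_mem_sqrtField_insert hmem
    by_cases hB0 : B = 0
    · exact ih hs' hd hd1 hds' (by simpa [hB0, hAB] using hA)
    by_cases hA0 : A = 0
    · have hsqrt_da : √((d * a : ℕ) : ℝ) = a * B := by
        rw [Nat.cast_mul, Real.sqrt_mul d.cast_nonneg, hAB, hA0, zero_add, mul_comm,
          ← mul_assoc, Real.mul_self_sqrt a.cast_nonneg]
      refine ih hs' ((Nat.squarefree_mul (hap.coprime_iff_not_dvd.2 had).symm).2
        ⟨hd, hap.squarefree⟩) (by simp [hap.ne_one]) (fun q hq hqda ↦ ?_) ?_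
      · exact ((hs' q hq).dvd_mul.1 hqda).elim (hds' q hq) (hqa q hq)
      · rw [hsqrt_da]
        exact mul_mem ((sqrtField s).natCast_mem a) hB
    · -- squaring `√d = A + √a B` isolates `√a`
      have hsq : (d : ℝ) = A ^ 2 + a * B ^ 2 + 2 * A * B * √(a : ℝ) := by
        rw [← Real.sq_sqrt d.cast_nonneg, hAB]
        linear_combination B ^ 2 * Real.sq_sqrt a.cast_nonneg
      have hsqrt_a : √(a : ℝ) = (d - A ^ 2 - a * B ^ 2) / (2 * A * B) := by
        field_simp
        linarith
      refine ih hs' hap.squarefree hap.ne_one hqa ?_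
      rw [hsqrt_a]
      exact div_mem (sub_mem (sub_mem ((sqrtField s).natCast_mem d) (pow_mem hA 2))
        (mul_mem ((sqrtField s).natCast_mem a) (pow_mem hB 2)))
        (mul_mem (mul_mem (ofNat_mem _ 2) hA) hB)

theorem span_sqrtProd_le_sqrtField (s : Finset ℕ) :
    Submodule.span ℚ (sqrtProd '' s.powerset) ≤
      Subalgebra.toSubmodule (sqrtField s).toSubalgebra :=
  Submodule.span_le.2 <| by
    rintro _ ⟨t, ht, rfl⟩
    exact sqrtProd_mem_sqrtField (mem_powerset.1 ht)

theorem linearIndepOn_sqrtProd_powerset {s : Finset ℕ} (hs : ∀ q ∈ s, q.Prime) :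
    LinearIndepOn ℚ sqrtProd (s.powerset : Set (Finset ℕ)) := by
  classical
  induction s using Finset.induction_on with
  | empty => simp [sqrtProd]
  | @insert a s ha ih =>
    have hs' : ∀ q ∈ s, q.Prime := fun q hq ↦ hs q (mem_insert_of_mem hq)
    have hap : a.Prime := hs a (mem_insert_self a s)
    have hsqrt_a : √(a : ℝ) ∉ sqrtField s :=
      sqrt_notMem_sqrtField hs' hap.squarefree hap.ne_one (not_dvd_prime_of_notMem hs' hap ha)
    let mulSqrt : ℝ →ₗ[ℚ] ℝ := LinearMap.mulLeft ℚ √(a : ℝ)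
    have hinsert : Set.EqOn (sqrtProd ∘ insert a) (mulSqrt ∘ sqrtProd) s.powerset :=
      fun t ht ↦ sqrtProd_insert (notMem_of_mem_powerset_of_notMem ht ha)
    have himage : sqrtProd '' (insert a '' s.powerset) = mulSqrt '' (sqrtProd '' s.powerset) := by
      rw [Set.image_image, Set.image_image]
      exact Set.image_congr hinsert
    rw [powerset_insert, coe_union, coe_image]
    refine ih hs' |>.union ?_ ?_
    · refine LinearIndepOn.image_of_comp _ _ (LinearIndepOn.congr ?_ hinsert.symm)
      refine (ih hs').map' mulSqrt (LinearMap.ker_eq_bot.2 ?_)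
      exact mul_right_injective₀ (by positivity [hap.pos])
    · rw [himage, Submodule.span_image, Submodule.disjoint_def]
      rintro x hx ⟨B, hB, rfl⟩
      have hxK := span_sqrtProd_le_sqrtField s hx
      have hBK := span_sqrtProd_le_sqrtField s hB
      by_contra hx0
      have hB0 : B ≠ 0 := right_ne_zero_of_mul hx0
      refine hsqrt_a ?_
      rw [show √(a : ℝ) = mulSqrt B / B by simp [mulSqrt, hB0]]
      exact div_mem hxK hBK

/-- Products of square roots of distinct primes over all subsets are
linearly independent over `ℚ`. -/
theorem sqrt_prime_products_linearIndependent
    (k : ℕ) (p : Fin k → ℕ) (hp : ∀ i, Nat.Prime (p i))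
    (hinj : Function.Injective p) :
    LinearIndependent ℚ (fun I : Finset (Fin k) => ∏ i ∈ I, Real.sqrt (p i)) := by
  let e : Fin k ↪ ℕ := ⟨p, hinj⟩
  have hprime : ∀ q ∈ univ.map e, q.Prime := by simpa [e] using hp
  have hmaps : Finset.map e '' Set.univ ⊆ (univ.map e).powerset := by
    rintro _ ⟨I, -, rfl⟩
    exact mem_powerset.2 (map_subset_map.2 (subset_univ I))
  have h := ((linearIndepOn_sqrtProd_powerset hprime).mono hmaps).comp_of_image
    (map_injective e).injOn
  rw [linearIndepOn_univ_iff] at h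
  convert h using 1
  ext I
  simp [sqrtProd, e]
end

section
/- Let p₁, …, p_k be distinct prime numbers and let F := ℚ(√p₁, √p₂, …, √p_k) ⊆ ℝ be the field obtained from ℚ by adjoining the k square roots √p_i. Then F has dimension 2^k as a vector space over ℚ, and the 2^k elements ∏_{i∈I} √p_i, as I ranges over all subsets of {1, …, k}, form a ℚ-basis of F. -/
/-!
Write `E_s = ℚ(√pᵢ : i ∈ s)`. The key fact is that `√(∏_{i ∈ t} pᵢ) ∉ E_s` whenever `t` is
nonempty and disjoint from `s`, proved by induction on `s`. Every element of `E(√pₐ)` has the form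
`u + v √pₐ` with `u, v ∈ E`, so an element of `E(√pₐ)` whose square lies in `E` lies in `E` or
becomes an element of `E` after multiplication by `√pₐ`; for `√(∏_{i ∈ t} pᵢ)` these two cases
contradict the induction hypothesis for `t` and for `t ∪ {a}`. Hence each adjunction doubles the
degree, so `[F : ℚ] = 2^k`. The `2^k` products span `F`, since their span is closed under
multiplication (`∏_I √pᵢ · ∏_J √pᵢ = (∏_{I ∩ J} pᵢ) ∏_{I ∆ J} √pᵢ`) and contains the generators;
being `dim F` many, they form a basis.
-/

open IntermediateField Polynomial Module

namespace IntermediateField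

section QuadraticExtension

variable {K L : Type*} [Field K] [Field L] [Algebra K L] {E : IntermediateField K L} {r : L}

theorem exists_eq_add_mul_of_mem_adjoin_of_sq_eq (c : E) (hc : r ^ 2 = c) {x : L}
    (hx : x ∈ E⟮r⟯) : ∃ u v : E, x = u + v * r := by
  have hroot : aeval r (X ^ 2 - C c) = 0 := by simp [hc]
  have hmonic : (X ^ 2 - C c).Monic := monic_X_pow_sub_C c two_ne_zero
  rw [← mem_toSubalgebra, adjoin_simple_toSubalgebra_of_isAlgebraic
    (IsIntegral.isAlgebraic ⟨_, hmonic, hroot⟩), Algebra.adjoin_singleton_eq_range_aeval] at hx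
  obtain ⟨f, rfl⟩ := hx
  have hdeg : (f %ₘ (X ^ 2 - C c)).natDegree ≤ 1 := by
    have := natDegree_modByMonic_lt f hmonic fun h => by simpa using congrArg natDegree h
    rw [natDegree_X_pow_sub_C] at this
    omega
  obtain ⟨v, u, hf⟩ := exists_eq_X_add_C_of_natDegree_le_one hdeg
  refine ⟨u, v, ?_⟩
  rw [AlgHom.toRingHom_eq_coe, RingHom.coe_coe, ← aeval_modByMonic_eq_self_of_root hroot, hf]
  simp [add_comm]

theorem mem_or_mul_mem_of_mem_adjoin_of_sq_eq [NeZero (2 : L)] (c : E) (hc : r ^ 2 = c)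
    (hr : r ∉ E) {x : L} (hx : x ∈ E⟮r⟯) (hx2 : x ^ 2 ∈ E) : x ∈ E ∨ x * r ∈ E := by
  obtain ⟨u, v, rfl⟩ := exists_eq_add_mul_of_mem_adjoin_of_sq_eq c hc hx
  have hcross : (2 * u * v : L) * r ∈ E := by
    have : (2 * u * v : L) * r = (u + v * r) ^ 2 - u ^ 2 - v ^ 2 * c := by rw [← hc]; ring
    rw [this]
    exact sub_mem (sub_mem hx2 (pow_mem u.2 2)) (mul_mem (pow_mem v.2 2) c.2)
  by_cases huv : (2 * u * v : L) = 0
  · rcases mul_eq_zero.1 huv with hu | hv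
    · right
      rw [(mul_eq_zero.1 hu).resolve_left two_ne_zero, zero_add, mul_assoc, ← sq, hc]
      exact mul_mem v.2 c.2
    · left
      rw [hv, zero_mul, add_zero]
      exact u.2
  · refine absurd ?_ hr
    rw [← inv_mul_cancel_left₀ huv r]
    exact mul_mem (inv_mem (mul_mem (mul_mem (ofNat_mem E 2) u.2) v.2)) hcross

theorem finrank_adjoin_eq_two_of_sq_eq (c : E) (hc : r ^ 2 = c) (hr : r ∉ E) :
    finrank E E⟮r⟯ = 2 := by
  have hroot : aeval r (X ^ 2 - C c) = 0 := by simp [hc]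
  have hmonic : (X ^ 2 - C c).Monic := monic_X_pow_sub_C c two_ne_zero
  have hirr : Irreducible (X ^ 2 - C c) := by
    refine X_pow_sub_C_irreducible_of_prime Nat.prime_two fun b hb => hr ?_
    rcases sq_eq_sq_iff_eq_or_eq_neg.1 (hc.trans (congrArg _ hb.symm)) with h | h
    · exact h ▸ b.2
    · exact h ▸ neg_mem b.2
  rw [adjoin.finrank ⟨_, hmonic, hroot⟩, ← minpoly.eq_of_irreducible_of_monic hirr hroot hmonic,
    natDegree_X_pow_sub_C]

end QuadraticExtension

theorem adjoin_image_insert {K L ι : Type*} [Field K] [Field L] [Algebra K L] [DecidableEq ι]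
    (f : ι → L) (a : ι) (s : Finset ι) :
    adjoin K (f '' ↑(insert a s)) = (adjoin (adjoin K (f '' ↑s)) {f a}).restrictScalars K := by
  rw [adjoin_adjoin_left, Finset.coe_insert, Set.image_insert_eq, Set.union_singleton]

end IntermediateField

theorem Nat.not_isSquare_prod_primes {ι : Type*} {p : ι → ℕ} (hp : ∀ i, (p i).Prime)
    (hinj : Function.Injective p) {t : Finset ι} (ht : t.Nonempty) :
    ¬IsSquare (∏ i ∈ t, p i) := by
  have hsf : Squarefree (∏ i ∈ t, p i) :=
    Finset.squarefree_prod_of_pairwise_isCoprime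
      (fun i _ j _ hij => Nat.coprime_iff_isRelPrime.1 <|
        (Nat.coprime_primes (hp i) (hp j)).2 (hinj.ne hij))
      fun i _ => (hp i).prime.squarefree
  rintro ⟨m, hm⟩
  obtain ⟨a, ha⟩ := ht
  have hdvd : p a ∣ m := by
    have := hm ▸ Finset.dvd_prod_of_mem p ha
    exact ((hp a).dvd_mul.1 this).elim id id
  exact (hp a).one_lt.ne' (Nat.isUnit_iff.1 (hsf _ (hm ▸ mul_dvd_mul hdvd hdvd)))

theorem Finset.prod_mul_prod_eq_prod_inter_sq_mul_prod_symmDiff {ι M : Type*} [CommMonoid M]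
    [DecidableEq ι] (f : ι → M) (I J : Finset ι) :
    (∏ i ∈ I, f i) * ∏ i ∈ J, f i = (∏ i ∈ I ∩ J, f i ^ 2) * ∏ i ∈ symmDiff I J, f i := by
  rw [Finset.symmDiff_def, prod_union disjoint_sdiff_sdiff, ← prod_inter_mul_prod_sdiff I J,
    ← prod_inter_mul_prod_sdiff J I, inter_comm J I, prod_pow, sq, mul_mul_mul_comm]

theorem Submodule.exists_basis_of_span_eq_of_card_eq_finrank {K M ι : Type*} [Field K]
    [AddCommGroup M] [Module K M] [Fintype ι] {v : ι → M} {W : Submodule K M}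
    (hspan : span K (Set.range v) = W) (hcard : Fintype.card ι = finrank K W) :
    ∃ b : Basis ι K W, ∀ i, (b i : M) = v i := by
  subst hspan
  exact ⟨.span (linearIndependent_iff_card_eq_finrank_span.2 hcard),
    fun i => congrArg Subtype.val (Basis.span_apply _ i)⟩

section SqrtPrimes

variable {ι : Type*} {p : ι → ℕ}

theorem sqrt_prod_primes_notMem_adjoin (hp : ∀ i, (p i).Prime) (hinj : Function.Injective p)
    (s : Finset ι) {t : Finset ι} (hst : Disjoint s t) (ht : t.Nonempty) :
    √(↑(∏ i ∈ t, p i) : ℝ) ∉ adjoin ℚ ((fun i => √(p i : ℝ)) '' ↑s) := by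
  classical
  induction s using Finset.induction_on generalizing t with
  | empty =>
    rw [Finset.coe_empty, Set.image_empty, adjoin_empty, mem_bot]
    rintro ⟨q, hq⟩
    exact irrational_sqrt_natCast_iff.2 (Nat.not_isSquare_prod_primes hp hinj ht)
      ⟨q, by simpa using hq⟩
  | insert a s ha ih =>
    set E := adjoin ℚ ((fun i => √(p i : ℝ)) '' ↑s)
    have hat : a ∉ t := Finset.disjoint_left.1 hst (Finset.mem_insert_self a s)
    have hst' : Disjoint s t := hst.mono_left (Finset.subset_insert a s)
    have hsq : ∀ n : ℕ, √(n : ℝ) ^ 2 = ((n : E) : ℝ) := fun n => by simp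
    have hra : √(p a : ℝ) ∉ E := by
      simpa using ih (t := {a}) (by simpa using ha) (Finset.singleton_nonempty a)
    rw [adjoin_image_insert, mem_restrictScalars]
    intro hx
    rcases mem_or_mul_mem_of_mem_adjoin_of_sq_eq _ (hsq (p a)) hra hx
      (by rw [hsq]; exact SetLike.coe_mem _) with h | h
    · exact ih hst' ht h
    · refine ih (t := insert a t) (Finset.disjoint_insert_right.2 ⟨ha, hst'⟩)
        (Finset.insert_nonempty a t) ?_
      rwa [Finset.prod_insert hat, Nat.cast_mul, Real.sqrt_mul (Nat.cast_nonneg _), mul_comm]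

theorem finrank_adjoin_sqrt_primes (hp : ∀ i, (p i).Prime) (hinj : Function.Injective p)
    (s : Finset ι) : finrank ℚ (adjoin ℚ ((fun i => √(p i : ℝ)) '' ↑s)) = 2 ^ s.card := by
  classical
  induction s using Finset.induction_on with
  | empty => simp
  | insert a s ha ih =>
    have hra := sqrt_prod_primes_notMem_adjoin hp hinj s (t := {a}) (by simpa using ha)
      (Finset.singleton_nonempty a)
    rw [Finset.prod_singleton] at hra
    rw [adjoin_image_insert]
    set E := adjoin ℚ ((fun i => √(p i : ℝ)) '' ↑s)
    refine (finrank_mul_finrank ℚ E E⟮√(p a : ℝ)⟯).symm.trans ?_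
    rw [ih, finrank_adjoin_eq_two_of_sq_eq (p a : E) (by simp) hra,
      Finset.card_insert_of_notMem ha, pow_succ]

theorem span_prod_sqrt_eq_adjoin [Fintype ι] (p : ι → ℕ) :
    Submodule.span ℚ (Set.range fun I : Finset ι => ∏ i ∈ I, √(p i : ℝ)) =
      Subalgebra.toSubmodule (adjoin ℚ (Set.range fun i => √(p i : ℝ))).toSubalgebra := by
  classical
  set W := Submodule.span ℚ (Set.range fun I : Finset ι => ∏ i ∈ I, √(p i : ℝ))
  have hone : (1 : ℝ) ∈ W := Submodule.subset_span ⟨∅, Finset.prod_empty⟩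
  have hmul : ∀ x y, x ∈ W → y ∈ W → x * y ∈ W := by
    suffices W * W ≤ W from fun x y hx hy => this (Submodule.mul_mem_mul hx hy)
    rw [Submodule.span_mul_span, Submodule.span_le]
    rintro _ ⟨_, ⟨I, rfl⟩, _, ⟨J, rfl⟩, rfl⟩
    dsimp only
    rw [Finset.prod_mul_prod_eq_prod_inter_sq_mul_prod_symmDiff]
    simp only [Real.sq_sqrt (Nat.cast_nonneg _)]
    rw [← Nat.cast_prod, ← nsmul_eq_mul]
    exact nsmul_mem (Submodule.subset_span (Set.mem_range_self (symmDiff I J))) _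
  have halg : ∀ x ∈ Set.range fun i => √(p i : ℝ), IsAlgebraic ℚ x := by
    rintro _ ⟨i, rfl⟩
    refine (IsIntegral.of_pow two_pos ?_).isAlgebraic
    rw [Real.sq_sqrt (Nat.cast_nonneg _)]
    exact isIntegral_natCast _
  apply le_antisymm
  · rw [Submodule.span_le]
    rintro _ ⟨I, rfl⟩
    exact Subalgebra.prod_mem _ fun i _ => subset_adjoin ℚ _ ⟨i, rfl⟩
  · rw [adjoin_toSubalgebra_of_isAlgebraic halg]
    intro x hx
    refine Algebra.adjoin_le (S := W.toSubalgebra hone hmul) ?_ hx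
    rintro _ ⟨i, rfl⟩
    exact Submodule.subset_span ⟨{i}, Finset.prod_singleton _ _⟩

end SqrtPrimes

/-- The field `ℚ(√p₁, …, √p_k)` obtained by adjoining square roots of `k`
distinct primes has dimension `2^k` over `ℚ`, with basis the products
`∏_{i ∈ I} √pᵢ` indexed by subsets `I ⊆ {1, …, k}`. -/
theorem adjoin_sqrt_primes_finrank_and_basis
    (k : ℕ) (p : Fin k → ℕ) (hp : ∀ i, Nat.Prime (p i))
    (hinj : Function.Injective p) :
    Module.finrank ℚ
        (IntermediateField.adjoin ℚ (Set.range fun i : Fin k => Real.sqrt (p i))) = 2 ^ k ∧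
      ∃ b : Module.Basis (Finset (Fin k)) ℚ
          (IntermediateField.adjoin ℚ (Set.range fun i : Fin k => Real.sqrt (p i))),
        ∀ I : Finset (Fin k), (b I : ℝ) = ∏ i ∈ I, Real.sqrt (p i) := by
  have hrank : finrank ℚ (adjoin ℚ (Set.range fun i : Fin k => √(p i : ℝ))) = 2 ^ k := by
    have := finrank_adjoin_sqrt_primes hp hinj Finset.univ
    rwa [Finset.coe_univ, Set.image_univ, Finset.card_univ, Fintype.card_fin] at this
  refine ⟨hrank, Submodule.exists_basis_of_span_eq_of_card_eq_finrank
    (span_prod_sqrt_eq_adjoin p) ?_⟩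
  rw [Fintype.card_finset, Fintype.card_fin]
  exact hrank.symm
end

section
/- Let p₁, …, p_k be distinct prime numbers with k ≥ 1. Then √p_k does not belong to the field F' := ℚ(√p₁, √p₂, …, √p_{k−1}) (which is ℚ itself when k = 1). -/
/-!
Induct on the set of primes already adjoined, with the stronger claim that `√b` is not
adjoined for any squarefree `b ≠ 1` coprime to them. If `√b ∈ F(√a)` with `a, b ∈ F`,
squaring `√b = x + y √a` shows `√b ∈ F`, `√a ∈ F` or `√(ba) ∈ F`; each of `b`, `a`, `ba`
is squarefree, `≠ 1` and coprime to the remaining primes, so induction applies. In the base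
case `√b` is irrational because a squarefree square is `1`.
-/

open IntermediateField

section QuadraticExtension

variable {K L : Type*} [Field K] [Field L] [Algebra K L] {F : IntermediateField K L} {α : L}

theorem exists_eq_add_mul_of_mem_adjoin_simple (hα : α * α ∈ F) {x : L} (hx : x ∈ F⟮α⟯) :
    ∃ a ∈ F, ∃ b ∈ F, x = a + b * α := by
  have hint : IsIntegral F α :=
    ⟨Polynomial.X ^ 2 - Polynomial.C ⟨α * α, hα⟩, Polynomial.monic_X_pow_sub_C _ two_ne_zero,
      by simp [sq]⟩
  rw [← mem_toSubalgebra, adjoin_simple_toSubalgebra_of_isAlgebraic hint.isAlgebraic] at hx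
  induction hx using Algebra.adjoin_induction with
  | mem y hy =>
    rw [Set.mem_singleton_iff.mp hy]
    exact ⟨0, zero_mem F, 1, one_mem F, by ring⟩
  | algebraMap r => exact ⟨r, r.2, 0, zero_mem F, by simp⟩
  | add y z _ _ hy hz =>
    obtain ⟨a, ha, b, hb, rfl⟩ := hy
    obtain ⟨c, hc, d, hd, rfl⟩ := hz
    exact ⟨a + c, add_mem ha hc, b + d, add_mem hb hd, by ring⟩
  | mul y z _ _ hy hz =>
    obtain ⟨a, ha, b, hb, rfl⟩ := hy
    obtain ⟨c, hc, d, hd, rfl⟩ := hz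
    exact ⟨a * c + b * d * (α * α), add_mem (mul_mem ha hc) (mul_mem (mul_mem hb hd) hα),
      a * d + b * c, add_mem (mul_mem ha hd) (mul_mem hb hc), by ring⟩

theorem mem_or_mem_or_mul_mem_of_mem_adjoin_simple [NeZero (2 : L)] {β : L} (hα : α * α ∈ F)
    (hβ : β * β ∈ F) (h : β ∈ F⟮α⟯) : β ∈ F ∨ α ∈ F ∨ β * α ∈ F := by
  obtain ⟨x, hx, y, hy, rfl⟩ := exists_eq_add_mul_of_mem_adjoin_simple hα h
  by_cases hy0 : y = 0
  · left
    simpa [hy0] using hx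
  by_cases hx0 : x = 0
  · right; right
    rw [hx0, zero_add, mul_assoc]
    exact mul_mem hy hα
  right; left
  have hsolve : α = ((x + y * α) * (x + y * α) - x * x - y * y * (α * α)) / (2 * x * y) := by
    field_simp
    ring
  rw [hsolve]
  exact div_mem (sub_mem (sub_mem hβ (mul_mem hx hx)) (mul_mem (mul_mem hy hy) hα))
    (mul_mem (mul_mem (ofNat_mem F 2) hx) hy)

end QuadraticExtension

theorem Squarefree.not_isSquare {R : Type*} [Monoid R] {b : R} (hb : Squarefree b)
    (hu : ¬IsUnit b) : ¬IsSquare b := by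
  rintro ⟨r, rfl⟩
  exact hu ((hb r dvd_rfl).mul (hb r dvd_rfl))

theorem sqrt_natCast_mul_self_mem (F : IntermediateField ℚ ℝ) (n : ℕ) : √(n : ℝ) * √n ∈ F := by
  rw [Real.mul_self_sqrt n.cast_nonneg]
  exact _root_.natCast_mem F n

theorem sqrt_natCast_not_mem_adjoin_sqrt (s : Finset ℕ) (hs : ∀ q ∈ s, q.Prime) {b : ℕ}
    (hb : Squarefree b) (hb1 : b ≠ 1) (hbs : ∀ q ∈ s, ¬q ∣ b) :
    √(b : ℝ) ∉ adjoin ℚ ((fun n : ℕ ↦ √(n : ℝ)) '' s) := by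
  induction s using Finset.induction_on generalizing b with
  | empty =>
    rw [Finset.coe_empty, Set.image_empty, adjoin_empty, mem_bot]
    exact irrational_sqrt_natCast_iff.mpr (hb.not_isSquare (Nat.isUnit_iff.not.mpr hb1))
  | @insert a s ha ih =>
    have hs' : ∀ q ∈ s, q.Prime := fun q hq ↦ hs q (Finset.mem_insert_of_mem hq)
    have hbs' : ∀ q ∈ s, ¬q ∣ b := fun q hq ↦ hbs q (Finset.mem_insert_of_mem hq)
    have hap : a.Prime := hs a (Finset.mem_insert_self a s)
    have has : ∀ q ∈ s, ¬q ∣ a := fun q hq hqa ↦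
      ha ((Nat.prime_dvd_prime_iff_eq (hs' q hq) hap).mp hqa ▸ hq)
    set F := adjoin ℚ ((fun n : ℕ ↦ √(n : ℝ)) '' s)
    intro hmem
    rw [Finset.coe_insert, Set.image_insert_eq, Set.insert_eq, Set.union_comm,
      ← adjoin_adjoin_left, mem_restrictScalars] at hmem
    rcases mem_or_mem_or_mul_mem_of_mem_adjoin_simple (sqrt_natCast_mul_self_mem F a)
      (sqrt_natCast_mul_self_mem F b) hmem with hb' | ha' | hba
    · exact ih hs' hb hb1 hbs' hb'
    · exact ih hs' hap.squarefree hap.one_lt.ne' has ha'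
    · have hcop : b.Coprime a :=
        ((Nat.Prime.coprime_iff_not_dvd hap).mpr (hbs a (Finset.mem_insert_self a s))).symm
      refine ih hs' (Nat.squarefree_mul_iff.mpr ⟨hcop, hb, hap.squarefree⟩) ?_ ?_ ?_
      · exact fun h ↦ hap.one_lt.ne' (Nat.eq_one_of_mul_eq_one_left h)
      · exact fun q hq hqba ↦ ((hs' q hq).prime.dvd_mul.mp hqba).elim (hbs' q hq) (has q hq)
      · rwa [Nat.cast_mul, Real.sqrt_mul b.cast_nonneg]

/-- If `p₁, …, p_k` are distinct primes (`k ≥ 1`), then `√p_k` does not belong to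
the field `ℚ(√p₁, …, √p_{k−1})` (which is `ℚ` itself when `k = 1`). -/
theorem sqrt_prime_not_mem_adjoin
    (k : ℕ) (hk : 1 ≤ k) (p : Fin k → ℕ) (hp : ∀ i, Nat.Prime (p i))
    (hinj : Function.Injective p) :
    Real.sqrt (p ⟨k - 1, by omega⟩) ∉
      IntermediateField.adjoin ℚ
        (Set.range fun i : Fin (k - 1) =>
          Real.sqrt (p (Fin.castLE (by omega : k - 1 ≤ k) i))) := by
  set q : Fin (k - 1) → ℕ := fun i ↦ p (Fin.castLE (by omega) i)
  have hrange : Set.range (fun i ↦ √(q i : ℝ)) =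
      (fun n : ℕ ↦ √(n : ℝ)) '' ↑(Finset.univ.image q) := by
    rw [Finset.coe_image, Finset.coe_univ, Set.image_univ, ← Set.range_comp]
    rfl
  rw [hrange]
  refine sqrt_natCast_not_mem_adjoin_sqrt _ ?_ (hp _).squarefree (hp _).one_lt.ne' ?_
  · simp only [Finset.mem_image, Finset.mem_univ, true_and, forall_exists_index]
    rintro _ i rfl
    exact hp _
  · simp only [Finset.mem_image, Finset.mem_univ, true_and, forall_exists_index]
    rintro _ i rfl hdvd
    have hi := hinj ((Nat.prime_dvd_prime_iff_eq (hp _) (hp _)).mp hdvd)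
    simp only [Fin.ext_iff, Fin.val_castLE] at hi
    omega
end

section
/- Let p₁, …, p_k be distinct prime numbers and let 𝔞 ⊆ ℝ be the ring of all integral linear combinations of the numbers ∏_{i∈I} √p_i, I ⊆ {1, …, k}. Let d ≥ 1 and let M be a d×d real matrix all of whose entries lie in 𝔞 and such that every entry of M − I lies in 2𝔞, where I is the identity matrix. Then M is invertible; in fact det M = 1 + 2α for some α ∈ 𝔞, and 1 + 2α ≠ 0. -/
/-!
Modulo the ideal `2𝔞`, the matrix `M` is congruent to the identity, hence so is `det M`: that is,
`det M = 1 + 2α` with `α ∈ 𝔞`. The ring `𝔞` consists of algebraic integers, being spanned by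
products of square roots of integers, so `1 + 2α = 0` would make `-1/2` an algebraic integer.
-/

/-- The ring `𝔞` of all integral linear combinations of the products
`∏_{i ∈ I} √pᵢ`, `I ⊆ {1, …, k}` (the empty product being `1`). -/
def intSqrtCombos (k : ℕ) (p : Fin k → ℕ) : Set ℝ :=
  {x | ∃ c : Finset (Fin k) → ℤ,
    x = ∑ I : Finset (Fin k), (c I : ℝ) * ∏ i ∈ I, Real.sqrt (p i)}

theorem Finset.prod_mul_prod_eq_prod_symmDiff_mul_prod_inter_sq {ι M : Type*} [CommMonoid M]
    [DecidableEq ι] (f : ι → M) (s t : Finset ι) :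
    (∏ i ∈ s, f i) * ∏ i ∈ t, f i = (∏ i ∈ symmDiff s t, f i) * ∏ i ∈ s ∩ t, f i ^ 2 := by
  have hunion : s ∪ t = symmDiff s t ∪ s ∩ t := (symmDiff_sup_inf s t).symm
  rw [← prod_union_inter, hunion, prod_union (s₂ := s ∩ t) (disjoint_symmDiff_inf s t), prod_pow,
    mul_assoc, sq]

theorem Matrix.det_sub_one_mem_of_forall_sub_one_mem {n A : Type*} [Fintype n] [DecidableEq n]
    [CommRing A] {J : Ideal A} {M : Matrix n n A} (h : ∀ i j, (M - 1) i j ∈ J) :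
    M.det - 1 ∈ J := by
  have hmap : (Ideal.Quotient.mk J).mapMatrix M = 1 := by
    rw [← sub_eq_zero, ← map_one (Ideal.Quotient.mk J).mapMatrix, ← map_sub]
    ext i j
    exact Ideal.Quotient.eq_zero_iff_mem.mpr (h i j)
  rw [← Ideal.Quotient.eq, RingHom.map_det, hmap, Matrix.det_one, map_one]

theorem Subring.exists_det_eq_one_add_mul {n R : Type*} [Fintype n] [DecidableEq n] [CommRing R]
    (S : Subring R) {c : R} (hc : c ∈ S) {M : Matrix n n R}
    (h : ∀ i j, ∃ α ∈ S, (M - 1) i j = c * α) : ∃ α ∈ S, M.det = 1 + c * α := by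
  have hM : ∀ i j, M i j ∈ S := fun i j => by
    obtain ⟨α, hα, hij⟩ := h i j
    rw [← sub_add_cancel (M i j) ((1 : Matrix n n R) i j), ← Matrix.sub_apply, hij,
      Matrix.one_apply]
    exact add_mem (mul_mem hc hα) (by split_ifs <;> simp)
  let M' : Matrix n n S := fun i j => ⟨M i j, hM i j⟩
  have hlift : S.subtype.mapMatrix M' = M := rfl
  have hcongr : ∀ i j, (M' - 1) i j ∈ Ideal.span {(⟨c, hc⟩ : S)} := fun i j => by
    obtain ⟨α, hα, hij⟩ := h i j
    refine Ideal.mem_span_singleton'.mpr ⟨⟨α, hα⟩, Subtype.ext ?_⟩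
    rw [← hlift, ← map_one S.subtype.mapMatrix, ← map_sub] at hij
    simpa [mul_comm] using hij.symm
  obtain ⟨β, hβ⟩ := Ideal.mem_span_singleton'.mp
    (Matrix.det_sub_one_mem_of_forall_sub_one_mem hcongr)
  refine ⟨β, β.2, ?_⟩
  rw [← hlift, ← RingHom.map_det, ← sub_add_cancel M'.det 1, ← hβ]
  simp [add_comm, mul_comm]

theorem one_add_two_mul_ne_zero_of_isIntegral {K : Type*} [Field K] [CharZero K] {x : K}
    (hx : IsIntegral ℤ x) : 1 + 2 * x ≠ 0 := by
  intro h
  have hx' : x = algebraMap ℚ K (-1 / 2) := by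
    rw [map_div₀, map_neg, map_one, map_ofNat]
    linear_combination h / 2
  rw [hx', isIntegral_algebraMap_iff (algebraMap ℚ K).injective,
    IsIntegrallyClosed.isIntegral_iff] at hx
  obtain ⟨n, hn⟩ := hx
  rw [eq_intCast] at hn
  have h2n : 2 * n = -1 := by exact_mod_cast (by rw [hn]; norm_num : 2 * (n : ℚ) = -1)
  omega

theorem isIntegral_sqrt_natCast (n : ℕ) : IsIntegral ℤ √(n : ℝ) :=
  IsIntegral.of_pow two_pos (by rw [Real.sq_sqrt n.cast_nonneg]; exact isIntegral_natCast n)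

section IntSqrtCombos

variable {k : ℕ} (p : Fin k → ℕ)

noncomputable def prodSqrt (I : Finset (Fin k)) : ℝ := ∏ i ∈ I, √(p i : ℝ)

theorem prodSqrt_mul_prodSqrt (I J : Finset (Fin k)) :
    prodSqrt p I * prodSqrt p J = (∏ i ∈ I ∩ J, (p i : ℤ)) • prodSqrt p (symmDiff I J) := by
  simp only [prodSqrt, Finset.prod_mul_prod_eq_prod_symmDiff_mul_prod_inter_sq, zsmul_eq_mul,
    Real.sq_sqrt (Nat.cast_nonneg _), Int.cast_prod, Int.cast_natCast, mul_comm]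

theorem intSqrtCombos_eq_span :
    intSqrtCombos k p = Submodule.span ℤ (Set.range (prodSqrt p)) := by
  ext x
  simp only [SetLike.mem_coe, Submodule.mem_span_range_iff_exists_fun, zsmul_eq_mul, eq_comm]
  rfl

theorem span_prodSqrt_mul_mem {x y : ℝ} (hx : x ∈ Submodule.span ℤ (Set.range (prodSqrt p)))
    (hy : y ∈ Submodule.span ℤ (Set.range (prodSqrt p))) :
    x * y ∈ Submodule.span ℤ (Set.range (prodSqrt p)) := by
  refine Submodule.mul_le.mp ?_ x hx y hy
  rw [Submodule.span_mul_span, Submodule.span_le]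
  rintro _ ⟨_, ⟨I, rfl⟩, _, ⟨J, rfl⟩, rfl⟩
  change prodSqrt p I * prodSqrt p J ∈ _
  rw [prodSqrt_mul_prodSqrt]
  exact Submodule.smul_mem _ _ (Submodule.subset_span ⟨_, rfl⟩)

noncomputable def intSqrtCombosSubring : Subring ℝ :=
  ((Submodule.span ℤ (Set.range (prodSqrt p))).toSubalgebra
      (Submodule.subset_span ⟨∅, Finset.prod_empty⟩)
      (fun _ _ => span_prodSqrt_mul_mem p)).toSubring.copy
    (intSqrtCombos k p) (intSqrtCombos_eq_span p)

theorem isIntegral_of_mem_intSqrtCombos {x : ℝ} (hx : x ∈ intSqrtCombos k p) :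
    IsIntegral ℤ x := by
  rw [intSqrtCombos_eq_span] at hx
  refine (Submodule.span_le (p := (integralClosure ℤ ℝ).toSubmodule)).mpr ?_ hx
  rintro _ ⟨I, rfl⟩
  exact Subalgebra.prod_mem _ fun i _ => isIntegral_sqrt_natCast (p i)

end IntSqrtCombos

theorem matrix_entries_int_sqrt_combos_invertible_general
    (k : ℕ) (p : Fin k → ℕ)
    (d : ℕ) (M : Matrix (Fin d) (Fin d) ℝ)
    (hMI : ∀ a b, ∃ α ∈ intSqrtCombos k p, (M - 1) a b = 2 * α) :
    (∃ α ∈ intSqrtCombos k p, M.det = 1 + 2 * α ∧ (1 : ℝ) + 2 * α ≠ 0) ∧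
    IsUnit M := by
  obtain ⟨α, hα, hdet⟩ :=
    (intSqrtCombosSubring p).exists_det_eq_one_add_mul (ofNat_mem _ 2) hMI
  have hne : (1 : ℝ) + 2 * α ≠ 0 :=
    one_add_two_mul_ne_zero_of_isIntegral (isIntegral_of_mem_intSqrtCombos p hα)
  exact ⟨⟨α, hα, hdet, hne⟩, M.isUnit_iff_isUnit_det.mpr (hdet ▸ hne.isUnit)⟩

/-- If `M` is a `d×d` real matrix with entries in `𝔞` such that all entries of
`M − I` lie in `2𝔞`, then `det M = 1 + 2α` with `α ∈ 𝔞`, `1 + 2α ≠ 0`,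
and `M` is invertible. -/
theorem matrix_entries_int_sqrt_combos_invertible
    (k : ℕ) (p : Fin k → ℕ) (hp : ∀ i, Nat.Prime (p i))
    (hinj : Function.Injective p)
    (d : ℕ) (hd : 1 ≤ d) (M : Matrix (Fin d) (Fin d) ℝ)
    (hM : ∀ a b, M a b ∈ intSqrtCombos k p)
    (hMI : ∀ a b, ∃ α ∈ intSqrtCombos k p, (M - 1) a b = 2 * α) :
    (∃ α ∈ intSqrtCombos k p, M.det = 1 + 2 * α ∧ (1 : ℝ) + 2 * α ≠ 0) ∧
    IsUnit M :=
  matrix_entries_int_sqrt_combos_invertible_general k p d M hMI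
end

section
/- Let D ≥ 1 and let m₁, m₂, m₃ ∈ ℤ₁^D, and set m = m₁ + m₂ + m₃. Then: (i) the integer ⟨m₁, m₂ + m₃⟩ + ⟨m₂, m₃⟩ is odd, and consequently |m₁|² + |m₂|² + |m₃|² ≠ |m|²; (ii) |m₁|² − |m₂|² − |m₃|² ≠ |m|²; (iii) |m₁|² + |m₂|² − |m₃|² = |m|² if and only if ⟨m₁ + m₃, m₂ + m₃⟩ = 0. In particular, the condition ±|m₁|² ± |m₂|² ± |m₃|² = ±|m|², with the sign pattern in which the terms for m₁, m₂ carry the same sign and the term for m₃ the opposite sign of the right-hand side excluded from cases (i)–(ii), is equivalent to ⟨m₁ + m₃, m₂ + m₃⟩ = 0. -/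
/-- The standard inner product `⟨u, v⟩ = u₁v₁ + ⋯ + u_D v_D` on `ℤ^D`. -/
def dotZ (D : ℕ) (u v : Fin D → ℤ) : ℤ := ∑ i, u i * v i

/-- Membership in the affine lattice `ℤ₁^D = (1,0,…,0) + 2ℤ^D`: the first
component is odd and all the other components are even. -/
def memZ1 (D : ℕ) (hD : 0 < D) (m : Fin D → ℤ) : Prop :=
  Odd (m ⟨0, hD⟩) ∧ ∀ i : Fin D, i ≠ ⟨0, hD⟩ → Even (m i)

/-!
Modulo 2 every vector of `ℤ₁^D` is the first unit vector, so the inner product of any two of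
them is odd. Each of the three relations, after expanding `|m|²`, says that twice some
integer vanishes; in (i) and (ii) that integer is a sum of an odd number of such inner
products, while in (iii) it is `⟨m₁ + m₃, m₂ + m₃⟩`.
-/

open Matrix

theorem dotZ_eq_dotProduct (D : ℕ) (u v : Fin D → ℤ) : dotZ D u v = u ⬝ᵥ v := rfl

theorem memZ1.odd_dotProduct {D : ℕ} {hD : 0 < D} {u v : Fin D → ℤ}
    (hu : memZ1 D hD u) (hv : memZ1 D hD v) : Odd (u ⬝ᵥ v) := by
  rw [dotProduct, ← Finset.add_sum_erase _ _ (Finset.mem_univ ⟨0, hD⟩)]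
  refine (hu.1.mul hv.1).add_even (Finset.even_sum _ fun i hi => ?_)
  exact (hu.2 i (Finset.ne_of_mem_erase hi)).mul_right _

section CommSemiring

variable {R n : Type*} [CommSemiring R] [Fintype n]

theorem add_add_dotProduct_add_add_self (a b c : n → R) :
    (a + b + c) ⬝ᵥ (a + b + c) =
      a ⬝ᵥ a + b ⬝ᵥ b + c ⬝ᵥ c + 2 * (a ⬝ᵥ b + a ⬝ᵥ c + b ⬝ᵥ c) := by
  simp only [add_dotProduct, dotProduct_add, dotProduct_comm b a, dotProduct_comm c a,
    dotProduct_comm c b]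
  ring

theorem add_dotProduct_add_same_right (a b c : n → R) :
    (a + c) ⬝ᵥ (b + c) = a ⬝ᵥ b + a ⬝ᵥ c + b ⬝ᵥ c + c ⬝ᵥ c := by
  simp only [add_dotProduct, dotProduct_add, dotProduct_comm c b]
  ring

end CommSemiring

/-- For `m₁, m₂, m₃ ∈ ℤ₁^D` and `m = m₁ + m₂ + m₃`:
(i) `⟨m₁, m₂+m₃⟩ + ⟨m₂, m₃⟩` is odd, hence `|m₁|² + |m₂|² + |m₃|² ≠ |m|²`;
(ii) `|m₁|² − |m₂|² − |m₃|² ≠ |m|²`;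
(iii) `|m₁|² + |m₂|² − |m₃|² = |m|²` iff `⟨m₁+m₃, m₂+m₃⟩ = 0`. -/
theorem z1_lattice_resonance_conditions
    (D : ℕ) (hD : 0 < D) (m₁ m₂ m₃ : Fin D → ℤ)
    (h₁ : memZ1 D hD m₁) (h₂ : memZ1 D hD m₂) (h₃ : memZ1 D hD m₃) :
    (Odd (dotZ D m₁ (m₂ + m₃) + dotZ D m₂ m₃) ∧
      dotZ D m₁ m₁ + dotZ D m₂ m₂ + dotZ D m₃ m₃ ≠
        dotZ D (m₁ + m₂ + m₃) (m₁ + m₂ + m₃)) ∧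
    (dotZ D m₁ m₁ - dotZ D m₂ m₂ - dotZ D m₃ m₃ ≠
      dotZ D (m₁ + m₂ + m₃) (m₁ + m₂ + m₃)) ∧
    (dotZ D m₁ m₁ + dotZ D m₂ m₂ - dotZ D m₃ m₃ =
        dotZ D (m₁ + m₂ + m₃) (m₁ + m₂ + m₃) ↔
      dotZ D (m₁ + m₃) (m₂ + m₃) = 0) := by
  simp only [dotZ_eq_dotProduct]
  rw [add_add_dotProduct_add_add_self, add_dotProduct_add_same_right, dotProduct_add]
  have hcross : Odd (m₁ ⬝ᵥ m₂ + m₁ ⬝ᵥ m₃ + m₂ ⬝ᵥ m₃) :=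
    ((h₁.odd_dotProduct h₂).add_odd (h₁.odd_dotProduct h₃)).add_odd (h₂.odd_dotProduct h₃)
  refine ⟨⟨hcross, ?_⟩, ?_, ?_⟩
  all_goals
    obtain ⟨k, hk⟩ := hcross
    obtain ⟨a, ha⟩ := h₂.odd_dotProduct h₂
    obtain ⟨b, hb⟩ := h₃.odd_dotProduct h₃
    omega
end

section
/- Let A and B be two d×d self-adjoint complex matrices, and for a self-adjoint matrix X let λ⁽¹⁾(X) ≤ λ⁽²⁾(X) ≤ ⋯ ≤ λ⁽ᵈ⁾(X) denote its eigenvalues listed in nondecreasing order with multiplicity. Then for every a = 1, …, d one has |λ⁽ᵃ⁾(A + B) − λ⁽ᵃ⁾(A)| ≤ Σ_{b=1}^{d} |λ⁽ᵇ⁾(B)|. -/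
/-!
Weyl's inequality. If `re ⟪T' x, x⟫ ≤ re ⟪T x, x⟫ + c ‖x‖²` for all `x`, then the `a`-th smallest
eigenvalues satisfy `λₐ(T') ≤ λₐ(T) + c`: the span of the first `a + 1` eigenvectors of `T` and the
span of the last `d - a` eigenvectors of `T'` meet in some `x ≠ 0`, on which the quadratic form of
`T` is at most `λₐ(T) ‖x‖²` and that of `T'` at least `λₐ(T') ‖x‖²`. For `T = A`, `T' = A + B`
and back, `c = ∑ b, |λ_b(B)|` bounds the quadratic form of `±B`.
-/

open Polynomial Finset
open scoped InnerProductSpace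

theorem Fintype.exists_equiv_comp_eq_of_map_univ_val_eq {ι α : Type*} [Fintype ι]
    {f g : ι → α} (h : univ.val.map f = univ.val.map g) : ∃ σ : ι ≃ ι, g ∘ σ = f := by
  classical
  refine ⟨Equiv.ofFiberEquiv fun c => Fintype.equivOfCardEq ?_, funext (Equiv.ofFiberEquiv_map _)⟩
  simpa only [Fintype.card_subtype, card_def, filter_val, Multiset.count_map, eq_comm] using
    congrArg (Multiset.count c) h

section Rayleigh

variable {𝕜 E ι : Type*} [RCLike 𝕜] [NormedAddCommGroup E] [InnerProductSpace 𝕜 E] [Fintype ι]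
  {T : E →ₗ[𝕜] E} {b : OrthonormalBasis ι 𝕜 E} {μ : ι → ℝ}

theorem OrthonormalBasis.re_inner_apply_self_eq_sum (hb : ∀ i, T (b i) = (μ i : 𝕜) • b i)
    (x : E) : RCLike.re ⟪T x, x⟫_𝕜 = ∑ i, μ i * ‖⟪b i, x⟫_𝕜‖ ^ 2 := by
  have hTx : T x = ∑ i, (⟪b i, x⟫_𝕜 * μ i) • b i := by
    conv_lhs => rw [← b.sum_repr' x]
    simp only [map_sum, map_smul, hb, smul_smul]
  rw [hTx, sum_inner, map_sum]
  refine sum_congr rfl fun i _ => ?_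
  have hi : ⟪(⟪b i, x⟫_𝕜 * μ i) • b i, x⟫_𝕜 = ((μ i * ‖⟪b i, x⟫_𝕜‖ ^ 2 : ℝ) : 𝕜) := by
    rw [inner_smul_left, map_mul, RCLike.conj_ofReal, mul_right_comm, RCLike.conj_mul]
    push_cast
    ring
  rw [hi, RCLike.ofReal_re]

theorem OrthonormalBasis.re_inner_apply_self_le (hb : ∀ i, T (b i) = (μ i : 𝕜) • b i) {x : E}
    {c : ℝ} (hc : ∀ i, ⟪b i, x⟫_𝕜 ≠ 0 → μ i ≤ c) : RCLike.re ⟪T x, x⟫_𝕜 ≤ c * ‖x‖ ^ 2 := by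
  rw [b.re_inner_apply_self_eq_sum hb, ← b.sum_sq_norm_inner_right, mul_sum]
  refine sum_le_sum fun i _ => ?_
  by_cases hi : ⟪b i, x⟫_𝕜 = 0
  · simp [hi]
  · exact mul_le_mul_of_nonneg_right (hc i hi) (by positivity)

theorem OrthonormalBasis.le_re_inner_apply_self (hb : ∀ i, T (b i) = (μ i : 𝕜) • b i) {x : E}
    {c : ℝ} (hc : ∀ i, ⟪b i, x⟫_𝕜 ≠ 0 → c ≤ μ i) : c * ‖x‖ ^ 2 ≤ RCLike.re ⟪T x, x⟫_𝕜 := by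
  rw [b.re_inner_apply_self_eq_sum hb, ← b.sum_sq_norm_inner_right, mul_sum]
  refine sum_le_sum fun i _ => ?_
  by_cases hi : ⟪b i, x⟫_𝕜 = 0
  · simp [hi]
  · exact mul_le_mul_of_nonneg_right (hc i hi) (by positivity)

end Rayleigh

theorem exists_ne_zero_forall_inner_eq_zero {𝕜 E ι : Type*} [RCLike 𝕜] [NormedAddCommGroup E]
    [InnerProductSpace 𝕜 E] [FiniteDimensional 𝕜 E] [Fintype ι] (v : ι → E)
    (h : Fintype.card ι < Module.finrank 𝕜 E) : ∃ x ≠ 0, ∀ i, ⟪v i, x⟫_𝕜 = 0 := by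
  let L : E →ₗ[𝕜] ι → 𝕜 := LinearMap.pi fun i => innerₛₗ 𝕜 (v i)
  obtain ⟨x, hxL, hx⟩ := Submodule.exists_mem_ne_zero_of_ne_bot
    (LinearMap.ker_ne_bot_of_finrank_lt (f := L) (by rwa [Module.finrank_fintype_fun_eq_card]))
  exact ⟨x, hx, fun i => congrFun (LinearMap.mem_ker.mp hxL) i⟩

theorem OrthonormalBasis.eigenvalue_le_eigenvalue_add_of_re_inner_le {𝕜 E : Type*} [RCLike 𝕜]
    [NormedAddCommGroup E] [InnerProductSpace 𝕜 E] {d : ℕ} {T T' : E →ₗ[𝕜] E}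
    {b b' : OrthonormalBasis (Fin d) 𝕜 E} {μ μ' : Fin d → ℝ} (hμ : Monotone μ)
    (hμ' : Monotone μ') (hb : ∀ i, T (b i) = (μ i : 𝕜) • b i)
    (hb' : ∀ i, T' (b' i) = (μ' i : 𝕜) • b' i) {c : ℝ}
    (hc : ∀ x, RCLike.re ⟪T' x, x⟫_𝕜 ≤ RCLike.re ⟪T x, x⟫_𝕜 + c * ‖x‖ ^ 2) (a : Fin d) :
    μ' a ≤ μ a + c := by
  have := b.toBasis.finiteDimensional_of_finite
  obtain ⟨x, hx0, hx⟩ := exists_ne_zero_forall_inner_eq_zero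
    (Sum.elim (fun i : Ioi a => b i) (fun j : Iio a => b' j)) (by
      rw [Fintype.card_sum, Fintype.card_coe, Fintype.card_coe, Fin.card_Ioi, Fin.card_Iio,
        Module.finrank_eq_card_basis b.toBasis, Fintype.card_fin]
      omega)
  have hle : RCLike.re ⟪T x, x⟫_𝕜 ≤ μ a * ‖x‖ ^ 2 := by
    refine b.re_inner_apply_self_le hb fun i hi => hμ (not_lt.mp fun hai => hi ?_)
    exact hx (Sum.inl ⟨i, mem_Ioi.mpr hai⟩)
  have hge : μ' a * ‖x‖ ^ 2 ≤ RCLike.re ⟪T' x, x⟫_𝕜 := by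
    refine b'.le_re_inner_apply_self hb' fun j hj => hμ' (not_lt.mp fun hja => hj ?_)
    exact hx (Sum.inr ⟨j, mem_Iio.mpr hja⟩)
  have hx2 : 0 < ‖x‖ ^ 2 := by positivity
  nlinarith [hc x]

theorem Matrix.IsHermitian.exists_orthonormalBasis_of_charpoly_eq {𝕜 n : Type*} [RCLike 𝕜]
    [Fintype n] [DecidableEq n] {M : Matrix n n 𝕜} (hM : M.IsHermitian) {μ : n → ℝ}
    (hμ : M.charpoly = ∏ i, (X - C (μ i : 𝕜))) :
    ∃ b : OrthonormalBasis n 𝕜 (EuclideanSpace 𝕜 n),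
      ∀ i, Matrix.toEuclideanLin M (b i) = (μ i : 𝕜) • b i := by
  have hroots : univ.val.map (RCLike.ofReal ∘ μ : n → 𝕜) =
      univ.val.map (RCLike.ofReal ∘ hM.eigenvalues) := by
    rw [← hM.roots_charpoly_eq_eigenvalues, hμ, roots_prod]
    · simp
    · simp [prod_ne_zero_iff, X_sub_C_ne_zero]
  obtain ⟨σ, hσ⟩ := Fintype.exists_equiv_comp_eq_of_map_univ_val_eq hroots
  refine ⟨hM.eigenvectorBasis.reindex σ.symm, fun i => ?_⟩
  have hσi : (hM.eigenvalues (σ i) : 𝕜) = μ i := congrFun hσ i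
  rw [OrthonormalBasis.reindex_apply, Equiv.symm_symm, ← hσi, Matrix.toLpLin_apply,
    hM.mulVec_eigenvectorBasis, WithLp.toLp_smul, WithLp.toLp_ofLp,
    RCLike.real_smul_eq_coe_smul (K := 𝕜)]

theorem eigenvalue_perturbation_lidskii_general
    (d : ℕ) (A B : Matrix (Fin d) (Fin d) ℂ)
    (hA : A.IsHermitian) (hB : B.IsHermitian)
    (μA μB μAB : Fin d → ℝ)
    (hμA : Monotone μA) (hμAB : Monotone μAB)
    (hcA : A.charpoly = ∏ i : Fin d, (Polynomial.X - Polynomial.C ((μA i : ℝ) : ℂ)))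
    (hcB : B.charpoly = ∏ i : Fin d, (Polynomial.X - Polynomial.C ((μB i : ℝ) : ℂ)))
    (hcAB : (A + B).charpoly =
      ∏ i : Fin d, (Polynomial.X - Polynomial.C ((μAB i : ℝ) : ℂ))) :
    ∀ a : Fin d, |μAB a - μA a| ≤ ∑ b : Fin d, |μB b| := by
  intro a
  obtain ⟨bA, hbA⟩ := hA.exists_orthonormalBasis_of_charpoly_eq hcA
  obtain ⟨bB, hbB⟩ := hB.exists_orthonormalBasis_of_charpoly_eq hcB
  obtain ⟨bAB, hbAB⟩ := (hA.add hB).exists_orthonormalBasis_of_charpoly_eq hcAB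
  set S := ∑ b : Fin d, |μB b|
  have hμB : ∀ i, |μB i| ≤ S := fun i => single_le_sum (fun j _ => abs_nonneg (μB j)) (mem_univ i)
  have hB_le (x) : RCLike.re ⟪Matrix.toEuclideanLin B x, x⟫_ℂ ≤ S * ‖x‖ ^ 2 :=
    bB.re_inner_apply_self_le hbB fun i _ => (le_abs_self _).trans (hμB i)
  have hB_ge (x) : -S * ‖x‖ ^ 2 ≤ RCLike.re ⟪Matrix.toEuclideanLin B x, x⟫_ℂ :=
    bB.le_re_inner_apply_self hbB fun i _ => neg_le.mp ((neg_le_abs _).trans (hμB i))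
  have h_add (x) : RCLike.re ⟪Matrix.toEuclideanLin (A + B) x, x⟫_ℂ =
      RCLike.re ⟪Matrix.toEuclideanLin A x, x⟫_ℂ + RCLike.re ⟪Matrix.toEuclideanLin B x, x⟫_ℂ := by
    rw [map_add, LinearMap.add_apply, inner_add_left, map_add]
  have hup := bA.eigenvalue_le_eigenvalue_add_of_re_inner_le hμA hμAB hbA hbAB
    (fun x => by linarith [h_add x, hB_le x]) a
  have hdown := bAB.eigenvalue_le_eigenvalue_add_of_re_inner_le hμAB hμA hbAB hbA
    (fun x => by linarith [h_add x, hB_ge x]) a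
  rw [abs_sub_le_iff]
  constructor <;> linarith

/-- Lidskii-type bound: if `A`, `B` are `d×d` self-adjoint complex matrices and
`μA`, `μB`, `μAB` enumerate the eigenvalues (with multiplicity, in nondecreasing
order) of `A`, `B` and `A + B` respectively, then
`|λ⁽ᵃ⁾(A+B) − λ⁽ᵃ⁾(A)| ≤ Σ_b |λ⁽ᵇ⁾(B)|` for every `a`. -/
theorem eigenvalue_perturbation_lidskii
    (d : ℕ) (A B : Matrix (Fin d) (Fin d) ℂ)
    (hA : A.IsHermitian) (hB : B.IsHermitian)
    (μA μB μAB : Fin d → ℝ)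
    (hμA : Monotone μA) (hμB : Monotone μB) (hμAB : Monotone μAB)
    (hcA : A.charpoly = ∏ i : Fin d, (Polynomial.X - Polynomial.C ((μA i : ℝ) : ℂ)))
    (hcB : B.charpoly = ∏ i : Fin d, (Polynomial.X - Polynomial.C ((μB i : ℝ) : ℂ)))
    (hcAB : (A + B).charpoly =
      ∏ i : Fin d, (Polynomial.X - Polynomial.C ((μAB i : ℝ) : ℂ))) :
    ∀ a : Fin d, |μAB a - μA a| ≤ ∑ b : Fin d, |μB b| :=
  eigenvalue_perturbation_lidskii_general d A B hA hB μA μB μAB hμA hμAB hcA hcB hcAB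
end

section
/- Let I ⊆ ℝ be an open interval, let A : I → (d×d self-adjoint complex matrices) be a map that is differentiable at a point ε₀ ∈ I, and let λ : I → ℝ be a function, continuous on I and differentiable at ε₀, such that λ(ε) is an eigenvalue of A(ε) for every ε ∈ I. Then |λ'(ε₀)| ≤ ‖A'(ε₀)‖₂. -/
/-!
If `B v = μ v` with `v ≠ 0` and `M` is self-adjoint, then some eigenvalue of `M` lies within
`‖B - M‖` of `μ`: expand `v` in an orthonormal eigenbasis of `M`. Take `B = A(ε)`, `M = A(ε₀)` and
`μ = λ(ε)`. As `λ` is continuous at `ε₀` and the eigenvalues of `A(ε₀)` other than `λ(ε₀)` are at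
positive distance from it, for `ε` near `ε₀` that eigenvalue must be `λ(ε₀)`, so
`|λ(ε) - λ(ε₀)| ≤ ‖A(ε) - A(ε₀)‖`. Dividing by `|ε - ε₀|` and letting `ε → ε₀` gives the bound.
-/

open Filter Topology

theorem HasDerivAt.norm_le_of_eventually_norm_sub_le {𝕜 F G : Type*} [NontriviallyNormedField 𝕜]
    [NormedAddCommGroup F] [NormedSpace 𝕜 F] [NormedAddCommGroup G] [NormedSpace 𝕜 G]
    {f : 𝕜 → F} {g : 𝕜 → G} {f' : F} {g' : G} {x : 𝕜}
    (hf : HasDerivAt f f' x) (hg : HasDerivAt g g' x)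
    (h : ∀ᶠ y in 𝓝 x, ‖f y - f x‖ ≤ ‖g y - g x‖) : ‖f'‖ ≤ ‖g'‖ := by
  refine le_of_tendsto_of_tendsto (hasDerivAt_iff_tendsto_slope.1 hf).norm
    (hasDerivAt_iff_tendsto_slope.1 hg).norm ?_
  filter_upwards [nhdsWithin_le_nhds h] with y hy
  rw [slope_def_module, slope_def_module, norm_smul, norm_smul]
  gcongr

theorem Filter.Tendsto.eventually_dist_le_of_exists_mem_finite {α X : Type*} [MetricSpace X]
    {l : Filter α} {u : α → X} {x : X} {r : α → ℝ} {S : Set X} (hS : S.Finite)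
    (hu : Tendsto u l (𝓝 x)) (hr : Tendsto r l (𝓝 0))
    (h : ∀ᶠ a in l, ∃ s ∈ S, dist (u a) s ≤ r a) : ∀ᶠ a in l, dist (u a) x ≤ r a := by
  have hfar : ∀ᶠ a in l, ∀ s ∈ S, s ≠ x → r a < dist (u a) s := by
    refine (eventually_all_finite hS).2 fun s _ => ?_
    by_cases hsx : s = x
    · exact Eventually.of_forall fun _ h => absurd hsx h
    · filter_upwards [hr.eventually_lt (hu.dist tendsto_const_nhds) (dist_pos.2 (Ne.symm hsx))]
        with a ha _ using ha
  filter_upwards [h, hfar] with a ⟨s, hs, hsa⟩ hfar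
  by_cases hsx : s = x
  · exact hsx ▸ hsa
  · exact absurd hsa (not_le.2 (hfar s hs hsx))

namespace LinearMap.IsSymmetric

variable {𝕜 E : Type*} [RCLike 𝕜] [NormedAddCommGroup E] [InnerProductSpace 𝕜 E]
  [FiniteDimensional 𝕜 E] {T : E →ₗ[𝕜] E} {n : ℕ}

theorem exists_abs_eigenvalues_sub_mul_norm_le (hT : T.IsSymmetric) (hn : Module.finrank 𝕜 E = n)
    (μ : ℝ) {v : E} (hv : v ≠ 0) :
    ∃ i, |hT.eigenvalues hn i - μ| * ‖v‖ ≤ ‖T v - (μ : 𝕜) • v‖ := by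
  have : Nontrivial E := nontrivial_of_ne v 0 hv
  have : Nonempty (Fin n) := ⟨⟨0, hn ▸ Module.finrank_pos⟩⟩
  obtain ⟨i, hi⟩ := Finite.exists_min fun i => |hT.eigenvalues hn i - μ|
  refine ⟨i, ?_⟩
  set b := hT.eigenvectorBasis hn
  have hcoord : ∀ j,
      b.repr (T v - (μ : 𝕜) • v) j = (hT.eigenvalues hn j - μ : ℝ) * b.repr v j := by
    intro j
    simp [b, hT.eigenvectorBasis_apply_self_apply, sub_mul, RCLike.real_smul_eq_coe_mul]
  rw [← b.repr.norm_map v, ← b.repr.norm_map]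
  refine (pow_le_pow_iff_left₀ (by positivity) (norm_nonneg _) two_ne_zero).1 ?_
  rw [mul_pow, EuclideanSpace.norm_sq_eq, EuclideanSpace.norm_sq_eq, Finset.mul_sum]
  gcongr with j
  rw [hcoord, norm_mul, mul_pow, RCLike.norm_ofReal]
  exact mul_le_mul_of_nonneg_right (pow_le_pow_left₀ (abs_nonneg _) (hi j) 2) (sq_nonneg _)

theorem exists_abs_eigenvalues_sub_le_opNorm (hT : T.IsSymmetric) (hn : Module.finrank 𝕜 E = n)
    {S : E →L[𝕜] E} {μ : ℝ} {v : E} (hv : v ≠ 0) (hSv : S v = (μ : 𝕜) • v) :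
    ∃ i, |hT.eigenvalues hn i - μ| ≤ ‖S - LinearMap.toContinuousLinearMap T‖ := by
  obtain ⟨i, hi⟩ := hT.exists_abs_eigenvalues_sub_mul_norm_le hn μ hv
  refine ⟨i, le_of_mul_le_mul_right ?_ (norm_pos_iff.2 hv)⟩
  calc |hT.eigenvalues hn i - μ| * ‖v‖ ≤ ‖T v - (μ : 𝕜) • v‖ := hi
    _ = ‖(S - LinearMap.toContinuousLinearMap T) v‖ := by
      rw [_root_.sub_apply, hSv, norm_sub_rev, LinearMap.coe_toContinuousLinearMap']
    _ ≤ ‖S - LinearMap.toContinuousLinearMap T‖ * ‖v‖ := ContinuousLinearMap.le_opNorm _ _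

end LinearMap.IsSymmetric

namespace Matrix

variable {𝕜 n : Type*} [RCLike 𝕜] [Fintype n] [DecidableEq n]

open scoped Norms.Elementwise in
theorem hasDerivAt_toEuclideanCLM {A : ℝ → Matrix n n 𝕜} {A' : Matrix n n 𝕜} {x : ℝ}
    (hA : ∀ i j, HasDerivAt (fun y => A y i j) (A' i j) x) :
    HasDerivAt (fun y => toEuclideanCLM (n := n) (𝕜 := 𝕜) (A y))
      (toEuclideanCLM (n := n) (𝕜 := 𝕜) A') x := by
  have hA' : HasDerivAt A A' x := hasDerivAt_pi.2 fun i => hasDerivAt_pi.2 (hA i)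
  exact (LinearMap.toContinuousLinearMap ((toEuclideanCLM (n := n) (𝕜 := 𝕜)).toAlgEquiv.toLinearMap
    |>.restrictScalars ℝ)).hasFDerivAt.comp_hasDerivAt x hA'

theorem exists_toEuclideanCLM_apply_eq_smul {B : Matrix n n 𝕜} {μ : 𝕜}
    (h : (B - μ • 1).det = 0) : ∃ v ≠ 0, toEuclideanCLM (n := n) (𝕜 := 𝕜) B v = μ • v := by
  obtain ⟨v, hv, hBv⟩ := exists_mulVec_eq_zero_iff.2 h
  rw [sub_mulVec, smul_mulVec, one_mulVec, sub_eq_zero] at hBv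
  exact ⟨WithLp.toLp 2 v, by simpa using hv, by rw [toEuclideanCLM_toLp, hBv]; rfl⟩

end Matrix

theorem eigenvalue_derivative_bound_general
    (d : ℕ) (a b : ℝ) (ε₀ : ℝ) (hε₀ : ε₀ ∈ Set.Ioo a b)
    (A : ℝ → Matrix (Fin d) (Fin d) ℂ) (A' : Matrix (Fin d) (Fin d) ℂ)
    (hherm : ∀ ε ∈ Set.Ioo a b, (A ε).IsHermitian)
    (hdiff : ∀ i j, HasDerivAt (fun ε => A ε i j) (A' i j) ε₀)
    (lam : ℝ → ℝ) (lam' : ℝ)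
    (hlam : HasDerivAt lam lam' ε₀)
    (heig : ∀ ε ∈ Set.Ioo a b, Matrix.det (A ε - ((lam ε : ℂ) • 1)) = 0) :
    |lam'| ≤ ‖Matrix.toEuclideanCLM (𝕜 := ℂ) A'‖ := by
  set g := fun ε => Matrix.toEuclideanCLM (𝕜 := ℂ) (A ε)
  have hg : HasDerivAt g (Matrix.toEuclideanCLM (𝕜 := ℂ) A') ε₀ :=
    Matrix.hasDerivAt_toEuclideanCLM hdiff
  have hT := Matrix.isSymmetric_toEuclideanLin_iff.2 (hherm ε₀ hε₀)
  have hn := finrank_euclideanSpace_fin (𝕜 := ℂ) (n := d)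
  have hnear : ∀ᶠ ε in 𝓝 ε₀,
      ∃ s ∈ Set.range (hT.eigenvalues hn), dist (lam ε) s ≤ ‖g ε - g ε₀‖ := by
    filter_upwards [isOpen_Ioo.mem_nhds hε₀] with ε hε
    obtain ⟨v, hv, hAv⟩ := Matrix.exists_toEuclideanCLM_apply_eq_smul (heig ε hε)
    obtain ⟨i, hi⟩ := hT.exists_abs_eigenvalues_sub_le_opNorm hn hv hAv
    exact ⟨_, Set.mem_range_self i, by rwa [Real.dist_eq, abs_sub_comm]⟩
  have hclose := hlam.continuousAt.tendsto.eventually_dist_le_of_exists_mem_finite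
    (Set.finite_range _) (tendsto_iff_norm_sub_tendsto_zero.1 hg.continuousAt.tendsto) hnear
  simp only [dist_eq_norm] at hclose
  simpa only [Real.norm_eq_abs] using hlam.norm_le_of_eventually_norm_sub_le hg hclose

/-- If `A(ε)` is a family of `d×d` self-adjoint complex matrices on an open
interval `I = (a, b)`, differentiable (entrywise) at `ε₀ ∈ I` with derivative
`A'`, and `λ(ε)` is a continuous function on `I`, differentiable at `ε₀`, which
is an eigenvalue of `A(ε)` for every `ε ∈ I`, then `|λ'(ε₀)| ≤ ‖A'‖₂`. -/
theorem eigenvalue_derivative_bound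
    (d : ℕ) (a b : ℝ) (ε₀ : ℝ) (hε₀ : ε₀ ∈ Set.Ioo a b)
    (A : ℝ → Matrix (Fin d) (Fin d) ℂ) (A' : Matrix (Fin d) (Fin d) ℂ)
    (hherm : ∀ ε ∈ Set.Ioo a b, (A ε).IsHermitian)
    (hdiff : ∀ i j, HasDerivAt (fun ε => A ε i j) (A' i j) ε₀)
    (lam : ℝ → ℝ) (lam' : ℝ)
    (hcont : ContinuousOn lam (Set.Ioo a b))
    (hlam : HasDerivAt lam lam' ε₀)
    (heig : ∀ ε ∈ Set.Ioo a b, Matrix.det (A ε - ((lam ε : ℂ) • 1)) = 0) :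
    |lam'| ≤ ‖Matrix.toEuclideanCLM (𝕜 := ℂ) A'‖ :=
  eigenvalue_derivative_bound_general d a b ε₀ hε₀ A A' hherm hdiff lam lam' hlam heig
end
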